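/- arXiv:1305.2743 — 2 statements merged into one kernel-verified Lean document; each statement's English description precedes it below -/
import Mathlib

section
/- Let G be a finite simple graph and k a nonnegative integer. There exists a set F of at most k edges of G such that the graph G/F obtained by contracting all edges of F is bipartite if and only if there exists a set F' of edges of G such that G \ F' (the graph obtained by deleting the edges F') is bipartite and the rank of F' (the number of edges in a spanning forest of the subgraph formed by the edges F') is at most k. -/
/-!
With `c(F)` the number of connected components of `(V, F)`, the rank is `r(F) = |V| - c(F)`
(vertices outside `esupp F` are isolated and cancel), and a spanning forest of `F` has exactly
`r(F)` edges. Given a 2-colouring of `G/F`, pull it back to `V`; the monochromatic edges of `G`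
form a modulator `F'`, and each of them lies inside a component of `F` (otherwise it would be a
monochromatic edge of `G/F`), so `r(F') ≤ r(F) ≤ |F|`. Conversely, given a 2-colouring `c` of
`G \ F'`, contract a spanning forest `T` of the `c`-monochromatic edges of `F'`: `c` is constant
on the components of `T`, and an edge of `G` joining two of them is either an edge of `G \ F'`
or an edge of `F'` that is not monochromatic, hence bichromatic either way; moreover
`|T| = r(T) ≤ r(F')`.
-/

/-- The set of vertices spanned by an edge set (endpoints of its edges). -/
def esupp {V : Type*} (F : Set (Sym2 V)) : Set V := {v | ∃ e ∈ F, v ∈ e}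

/-- The number of connected components of the graph with edge set `F`
that meet the vertex set `S`. -/
noncomputable def ncomp {V : Type*} (F : Set (Sym2 V)) (S : Set V) : ℕ :=
  Nat.card {c : (SimpleGraph.fromEdgeSet F).ConnectedComponent //
    ∃ v ∈ S, (SimpleGraph.fromEdgeSet F).connectedComponentMk v = c}

/-- The rank of an edge set `F`: number of vertices spanned by `F` minus the
number of connected components of the graph `G[F]` (vertex set `esupp F`, edge set `F`). -/
noncomputable def erank {V : Type*} (F : Set (Sym2 V)) : ℕ :=
  Nat.card (esupp F) - ncomp F (esupp F)

/-- The graph `G/F` obtained by contracting all edges of `F`: its vertices are the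
connected components of the graph with edge set `F`, two components adjacent if
`G` has an edge between them. -/
def contractE {V : Type*} (G : SimpleGraph V) (F : Set (Sym2 V)) :
    SimpleGraph ((SimpleGraph.fromEdgeSet F).ConnectedComponent) :=
  SimpleGraph.fromRel fun a b =>
    ∃ u v, G.Adj u v ∧ (SimpleGraph.fromEdgeSet F).connectedComponentMk u = a ∧
      (SimpleGraph.fromEdgeSet F).connectedComponentMk v = b

open SimpleGraph Set

namespace SimpleGraph

variable {V : Type*} {H : SimpleGraph V} {u v x y : V}

lemma reachable_sup_edge_iff :
    (H ⊔ edge u v).Reachable x y ↔ H.Reachable x y ∨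
      (H.Reachable x u ∧ H.Reachable v y) ∨ (H.Reachable x v ∧ H.Reachable u y) := by
  constructor
  · rintro ⟨p⟩
    induction p with
    | nil => exact .inl .rfl
    | cons hadj _ ih =>
      rcases hadj with hadj | hadj
      · have := hadj.reachable
        grind [Reachable.trans]
      · obtain ⟨⟨rfl, rfl⟩ | ⟨rfl, rfl⟩, -⟩ := (edge_adj ..).mp hadj <;>
          grind [Reachable.refl]
  · have huv : (H ⊔ edge u v).Reachable u v := by
      rcases eq_or_ne u v with rfl | hne
      · rfl
      · exact Adj.reachable (Or.inr ((edge_adj ..).mpr ⟨.inl ⟨rfl, rfl⟩, hne⟩))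
    have hle : ∀ {a b}, H.Reachable a b → (H ⊔ edge u v).Reachable a b :=
      fun h ↦ h.mono le_sup_left
    rintro (h | ⟨h₁, h₂⟩ | ⟨h₁, h₂⟩)
    · exact hle h
    · exact (hle h₁).trans (huv.trans (hle h₂))
    · exact (hle h₁).trans (huv.symm.trans (hle h₂))

lemma card_connectedComponent_sup_edge_add_one [Finite V] (h : ¬H.Reachable u v) :
    Nat.card (H ⊔ edge u v).ConnectedComponent + 1 = Nat.card H.ConnectedComponent := by
  set f := ConnectedComponent.map (Hom.ofLE (le_sup_left : H ≤ H ⊔ edge u v))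
  have hf : ∀ w, f (H.connectedComponentMk w) = (H ⊔ edge u v).connectedComponentMk w :=
    fun _ ↦ rfl
  -- adding `s(u, v)` merges the components of `u` and `v` and nothing else
  set S : Set H.ConnectedComponent := {H.connectedComponentMk v}ᶜ
  have himage : f '' S = univ := by
    refine eq_univ_of_forall (ConnectedComponent.ind fun w ↦ ?_)
    by_cases hw : H.Reachable w v
    · refine ⟨H.connectedComponentMk u, fun huv ↦ h (ConnectedComponent.eq.mp huv), ?_⟩
      rw [hf, ConnectedComponent.eq]
      exact reachable_sup_edge_iff.mpr (.inr (.inl ⟨.rfl, hw.symm⟩))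
    · exact ⟨H.connectedComponentMk w, fun hwv ↦ hw (ConnectedComponent.eq.mp hwv), rfl⟩
  have hinj : InjOn f S := by
    refine ConnectedComponent.ind fun a ha ↦ ConnectedComponent.ind fun b hb hab ↦ ?_
    simp only [S, mem_compl_iff, mem_singleton_iff, ConnectedComponent.eq] at ha hb
    rw [hf, hf, ConnectedComponent.eq, reachable_sup_edge_iff] at hab
    rw [ConnectedComponent.eq]
    grind [Reachable.symm]
  calc Nat.card (H ⊔ edge u v).ConnectedComponent + 1
      = S.ncard + ({H.connectedComponentMk v} : Set _).ncard := by
        rw [← ncard_univ, ← himage, hinj.ncard_image, ncard_singleton]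
    _ = Nat.card H.ConnectedComponent := by rw [add_comm, ncard_add_ncard_compl]

lemma card_connectedComponent_bot [Finite V] :
    Nat.card (⊥ : SimpleGraph V).ConnectedComponent = Nat.card V :=
  (Nat.card_eq_of_bijective _ ⟨fun _ _ h ↦ reachable_bot.mp (ConnectedComponent.eq.mp h),
    fun c ↦ c.exists_rep⟩).symm

theorem IsAcyclic.card_edgeSet_add_card_connectedComponent [Finite V] (hH : H.IsAcyclic) :
    Nat.card H.edgeSet + Nat.card H.ConnectedComponent = Nat.card V := by
  induction H using WellFoundedLT.induction with
  | _ H ih =>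
  rcases H.edgeSet.eq_empty_or_nonempty with hbot | ⟨e, he⟩
  · rw [edgeSet_eq_empty.mp hbot, card_connectedComponent_bot, edgeSet_bot, Nat.card_of_isEmpty,
      zero_add]
  induction e using Sym2.ind with | _ u v => ?_
  have hne : u ≠ v := (mem_edgeSet H).mp he |>.ne
  have hle : edge u v ≤ H := (edge_le_iff H).mpr (.inr he)
  have hsup : H \ edge u v ⊔ edge u v = H := sdiff_sup_cancel hle
  have hnr : ¬(H \ edge u v).Reachable u v := by
    rw [← hsup, isAcyclic_sup_fromEdgeSet_iff] at hH
    exact fun h ↦ (hH.2 h).elim hne fun hadj ↦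
      ((sdiff_adj ..).mp hadj).2 (by simp [edge_adj, hne])
  have hedges : Nat.card (H \ edge u v).edgeSet + 1 = Nat.card H.edgeSet := by
    rw [edgeSet_sdiff, edgeSet_edge_of_ne hne, Nat.card_coe_set_eq, Nat.card_coe_set_eq,
      ncard_sdiff_singleton_add_one he]
  have hlt : H \ edge u v < H :=
    sdiff_lt hle (by rw [Ne, ← edgeSet_inj, edgeSet_edge_of_ne hne]; simp)
  have hcard := ih _ hlt (hH.anti hlt.le)
  have hstep := card_connectedComponent_sup_edge_add_one hnr
  rw [hsup] at hstep
  omega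

theorem ConnectedComponent.card_le_card_of_reachable_le [Finite V] {G₁ G₂ : SimpleGraph V}
    (h : G₁.Reachable ≤ G₂.Reachable) :
    Nat.card G₂.ConnectedComponent ≤ Nat.card G₁.ConnectedComponent :=
  Nat.card_le_card_of_surjective
    (ConnectedComponent.lift G₂.connectedComponentMk fun _ _ p _ ↦
      ConnectedComponent.eq.mpr (h _ _ ⟨p⟩))
    fun c ↦ c.ind fun v ↦ ⟨G₁.connectedComponentMk v, rfl⟩

lemma reachable_fromEdgeSet_le {F F' : Set (Sym2 V)}
    (h : ∀ u v, s(u, v) ∈ F' → (fromEdgeSet F).Reachable u v) :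
    (fromEdgeSet F').Reachable ≤ (fromEdgeSet F).Reachable := by
  rw [reachable_fromEdgeSet_eq_reflTransGen_toRel, reachable_fromEdgeSet_eq_reflTransGen_toRel]
  refine Relation.reflTransGen_closed fun u v huv ↦ ?_
  rw [← reachable_fromEdgeSet_eq_reflTransGen_toRel]
  exact h u v ((Sym2.toRel_prop ..).mp huv)

end SimpleGraph

section Rank

variable {V : Type*} {F F' : Set (Sym2 V)}

lemma eq_of_reachable_of_notMem_esupp {v w : V} (hv : v ∉ esupp F)
    (h : (fromEdgeSet F).Reachable v w) : v = w := by
  obtain ⟨p⟩ := h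
  cases p with
  | nil => rfl
  | cons hadj _ => exact absurd ⟨_, ((fromEdgeSet_adj F).mp hadj).1, Sym2.mem_mk_left _ _⟩ hv

variable [Finite V]

lemma erank_eq_card_sub_card_connectedComponent (F : Set (Sym2 V)) :
    erank F = Nat.card V - Nat.card (fromEdgeSet F).ConnectedComponent := by
  rw [erank, Nat.card_coe_set_eq]
  set mk := (fromEdgeSet F).connectedComponentMk
  set S := esupp F
  have hcover : mk '' S ∪ mk '' Sᶜ = univ := by
    rw [← image_union, union_compl_self, image_univ_of_surjective fun c ↦ c.exists_rep]
  have hdisj : Disjoint (mk '' S) (mk '' Sᶜ) := by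
    refine disjoint_left.mpr ?_
    rintro _ ⟨a, ha, rfl⟩ ⟨b, hb, hba⟩
    exact hb (eq_of_reachable_of_notMem_esupp hb (ConnectedComponent.eq.mp hba) ▸ ha)
  have hinj : InjOn mk Sᶜ := fun a ha _ _ hab ↦
    eq_of_reachable_of_notMem_esupp ha (ConnectedComponent.eq.mp hab)
  have hcomp : Nat.card (fromEdgeSet F).ConnectedComponent = (mk '' S).ncard + Sᶜ.ncard := by
    rw [← ncard_univ, ← hcover, ncard_union_eq hdisj, hinj.ncard_image]
  have hncomp : ncomp F S = (mk '' S).ncard := Nat.card_coe_set_eq _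
  rw [hcomp, ← ncard_add_ncard_compl S, hncomp]
  omega

lemma erank_le_erank_of_reachable (h : ∀ u v, s(u, v) ∈ F' → (fromEdgeSet F).Reachable u v) :
    erank F' ≤ erank F := by
  rw [erank_eq_card_sub_card_connectedComponent, erank_eq_card_sub_card_connectedComponent]
  exact Nat.sub_le_sub_left
    (ConnectedComponent.card_le_card_of_reachable_le (reachable_fromEdgeSet_le h)) _

lemma erank_mono (h : F' ⊆ F) : erank F' ≤ erank F := by
  refine erank_le_erank_of_reachable fun u v huv ↦ ?_
  rcases eq_or_ne u v with rfl | hne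
  · rfl
  · exact ((fromEdgeSet_adj F).mpr ⟨h huv, hne⟩).reachable

lemma exists_subset_card_eq_erank_reachable_eq (F : Set (Sym2 V)) :
    ∃ T ⊆ F, Nat.card T = erank F ∧
      (fromEdgeSet T).Reachable = (fromEdgeSet F).Reachable := by
  obtain ⟨T, hle, hT, hreach⟩ := (fromEdgeSet F).exists_isAcyclic_reachable_eq_le
  have hcard : Nat.card T.ConnectedComponent = Nat.card (fromEdgeSet F).ConnectedComponent :=
    le_antisymm (ConnectedComponent.card_le_card_of_reachable_le hreach.ge)
      (ConnectedComponent.card_le_card_of_reachable_le hreach.le)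
  refine ⟨T.edgeSet, (edgeSet_mono hle).trans (by simp), ?_, by rwa [fromEdgeSet_edgeSet]⟩
  rw [erank_eq_card_sub_card_connectedComponent, ← hcard,
    ← hT.card_edgeSet_add_card_connectedComponent, Nat.add_sub_cancel]

lemma erank_le_ncard (F : Set (Sym2 V)) : erank F ≤ F.ncard := by
  obtain ⟨T, hTF, hT, -⟩ := exists_subset_card_eq_erank_reachable_eq F
  rw [← hT, Nat.card_coe_set_eq]
  exact ncard_le_ncard hTF

end Rank

section Contraction

variable {V α : Type*} {G : SimpleGraph V}

def monoEdges (F : Set (Sym2 V)) (κ : V → α) : Set (Sym2 V) := {e ∈ F | (e.map κ).IsDiag}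

lemma mk_mem_monoEdges {F : Set (Sym2 V)} {κ : V → α} {u v : V} :
    s(u, v) ∈ monoEdges F κ ↔ s(u, v) ∈ F ∧ κ u = κ v := by
  simp [monoEdges]

lemma monoEdges_subset (F : Set (Sym2 V)) (κ : V → α) : monoEdges F κ ⊆ F := sep_subset _ _

def coloringDeleteMonoEdges (G : SimpleGraph V) (κ : V → α) :
    (G.deleteEdges (monoEdges G.edgeSet κ)).Coloring α :=
  Coloring.mk κ fun huv heq ↦ ((deleteEdges_adj ..).mp huv).2 (mk_mem_monoEdges.mpr
    ⟨((deleteEdges_adj ..).mp huv).1, heq⟩)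

lemma eq_of_reachable_fromEdgeSet_monoEdges {F : Set (Sym2 V)} {κ : V → α} {u v : V}
    (h : (fromEdgeSet (monoEdges F κ)).Reachable u v) : κ u = κ v := by
  rw [reachable_fromEdgeSet_eq_reflTransGen_toRel] at h
  have := Relation.ReflTransGen.lift κ (p := Eq)
    (fun a b hab ↦ (mk_mem_monoEdges.mp ((Sym2.toRel_prop ..).mp hab)).2) _ _ h
  rwa [Relation.reflTransGen_eq_self] at this

lemma contractE_adj {F : Set (Sym2 V)} {X Y : (fromEdgeSet F).ConnectedComponent} :
    (contractE G F).Adj X Y ↔ X ≠ Y ∧ ∃ u v, G.Adj u v ∧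
      (fromEdgeSet F).connectedComponentMk u = X ∧
        (fromEdgeSet F).connectedComponentMk v = Y := by
  rw [contractE, fromRel_adj]
  refine and_congr_right fun _ ↦ ⟨?_, .inl⟩
  rintro (h | ⟨u, v, huv, hu, hv⟩)
  exacts [h, ⟨v, u, huv.symm, hv, hu⟩]

lemma reachable_of_coloring_contractE {F : Set (Sym2 V)} (c : (contractE G F).Coloring α)
    {u v : V} (huv : G.Adj u v)
    (hc : c ((fromEdgeSet F).connectedComponentMk u) = c ((fromEdgeSet F).connectedComponentMk v)) :
    (fromEdgeSet F).Reachable u v := by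
  by_contra hnr
  exact c.valid
    (contractE_adj.mpr ⟨fun h ↦ hnr (ConnectedComponent.eq.mp h), u, v, huv, rfl, rfl⟩) hc

lemma nonempty_coloring_contractE {F' T : Set (Sym2 V)} (c : (G.deleteEdges F').Coloring α)
    (hT : (fromEdgeSet T).Reachable = (fromEdgeSet (monoEdges F' c)).Reachable) :
    Nonempty ((contractE G T).Coloring α) := by
  have hconst : ∀ u v, (fromEdgeSet T).Reachable u v → c u = c v := fun u v h ↦
    eq_of_reachable_fromEdgeSet_monoEdges (hT ▸ h)
  refine ⟨Coloring.mk (ConnectedComponent.lift c fun u v p _ ↦ hconst u v ⟨p⟩) ?_⟩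
  rintro _ _ hXY
  obtain ⟨hne, u, v, huv, rfl, rfl⟩ := contractE_adj.mp hXY
  rw [ConnectedComponent.lift_mk, ConnectedComponent.lift_mk]
  intro hcuv
  by_cases hF' : s(u, v) ∈ F'
  · have hmono : (fromEdgeSet (monoEdges F' c)).Adj u v :=
      (fromEdgeSet_adj _).mpr ⟨mk_mem_monoEdges.mpr ⟨hF', hcuv⟩, huv.ne⟩
    exact hne (ConnectedComponent.eq.mpr (hT ▸ hmono.reachable))
  · exact c.valid ((deleteEdges_adj ..).mpr ⟨huv, hF'⟩) hcuv

end Contraction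

/-- `G` has a set of at most `k` edges whose contraction makes it
bipartite iff `G` has a bipartite modulator of rank at most `k`. -/
theorem stmt0 {V : Type*} [Fintype V] (G : SimpleGraph V) (k : ℕ) :
    (∃ F ⊆ G.edgeSet, Nat.card F ≤ k ∧ (contractE G F).Colorable 2) ↔
    (∃ F' ⊆ G.edgeSet, (G.deleteEdges F').Colorable 2 ∧ erank F' ≤ k) := by
  constructor
  · rintro ⟨F, -, hFk, ⟨c⟩⟩
    set κ := fun v ↦ c ((fromEdgeSet F).connectedComponentMk v)
    refine ⟨monoEdges G.edgeSet κ, monoEdges_subset _ _,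
      ⟨coloringDeleteMonoEdges G κ⟩, ?_⟩
    calc erank (monoEdges G.edgeSet κ)
        ≤ erank F := erank_le_erank_of_reachable fun u v huv ↦
          reachable_of_coloring_contractE c (mk_mem_monoEdges.mp huv).1 (mk_mem_monoEdges.mp huv).2
      _ ≤ F.ncard := erank_le_ncard F
      _ ≤ k := by rwa [← Nat.card_coe_set_eq]
  · rintro ⟨F', hF'G, ⟨c⟩, hk⟩
    obtain ⟨T, hTM, hTcard, hTreach⟩ :=
      exists_subset_card_eq_erank_reachable_eq (monoEdges F' c)
    refine ⟨T, hTM.trans ((monoEdges_subset _ _).trans hF'G), ?_,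
      nonempty_coloring_contractE c hTreach⟩
    calc Nat.card T = erank (monoEdges F' c) := hTcard
      _ ≤ erank F' := erank_mono (monoEdges_subset _ _)
      _ ≤ k := hk
end

section
/- Let G be a finite simple graph and F a minimal set of edges such that G \ F is bipartite, witnessed by a proper 2-coloring c of G \ F. Then every two vertices lying in the same connected component of G[F] receive the same color under c. -/
/-!
If an edge `e ∈ F` had differently coloured endpoints, `c` would still be a proper colouring
of `G \ (F \ {e})`, contradicting the minimality of `F`. So `c` is constant along the edges
of `F`, hence on the connected components of `G[F]`.
-/

namespace SimpleGraph

variable {V α : Type*} {G : SimpleGraph V}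

lemma Reachable.eq_of_forall_adj_eq {f : V → α} (hf : ∀ a b, G.Adj a b → f a = f b) {u v : V}
    (h : G.Reachable u v) : f u = f v := by
  obtain ⟨w⟩ := h
  induction w with
  | nil => rfl
  | cons hadj _ ih => exact (hf _ _ hadj).trans ih

lemma deleteEdges_sdiff_singleton_adj_ne {F : Set (Sym2 V)} {c : V → α}
    (hc : ∀ u v, (G.deleteEdges F).Adj u v → c u ≠ c v) {a b : V} (hab : c a ≠ c b) {u v : V}
    (huv : (G.deleteEdges (F \ {s(a, b)})).Adj u v) : c u ≠ c v := by
  rw [deleteEdges_adj] at huv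
  obtain ⟨hG, hnot⟩ := huv
  by_cases huvF : s(u, v) ∈ F
  · have : s(u, v) = s(a, b) := by_contra fun hne => hnot ⟨huvF, hne⟩
    rcases Sym2.eq_iff.1 this with ⟨rfl, rfl⟩ | ⟨rfl, rfl⟩
    · exact hab
    · exact hab.symm
  · exact hc u v (deleteEdges_adj.2 ⟨hG, huvF⟩)

lemma eq_of_mem_of_minimal_deleteEdges {F : Set (Sym2 V)} {c : V → Fin 2}
    (hc : ∀ u v, (G.deleteEdges F).Adj u v → c u ≠ c v)
    (hmin : ∀ F' ⊂ F, ¬ (G.deleteEdges F').Colorable 2) {a b : V} (hab : s(a, b) ∈ F) :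
    c a = c b := by
  by_contra hne
  exact hmin _ (Set.sdiff_singleton_ssubset.2 hab)
    ⟨Coloring.mk c fun huv => deleteEdges_sdiff_singleton_adj_ne hc hne huv⟩

end SimpleGraph

theorem stmt2_general {V : Type*} (G : SimpleGraph V) (F : Set (Sym2 V))
    (c : V → Fin 2) (hc : ∀ u v, (G.deleteEdges F).Adj u v → c u ≠ c v)
    (hmin : ∀ F'' ⊂ F, ¬ (G.deleteEdges F'').Colorable 2)
    (u v : V) (h : (SimpleGraph.fromEdgeSet F).Reachable u v) : c u = c v :=
  h.eq_of_forall_adj_eq fun _ _ hab =>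
    SimpleGraph.eq_of_mem_of_minimal_deleteEdges hc hmin ((SimpleGraph.fromEdgeSet_adj F).1 hab).1

/-- if `F` is a minimal edge set such that `G \ F` is bipartite,
witnessed by a proper 2-coloring `c` of `G \ F`, then any two vertices in the same
connected component of `G[F]` (i.e. joined by a path using only edges of `F`)
receive the same color under `c`. -/
theorem stmt2 {V : Type*} [Fintype V] (G : SimpleGraph V) (F : Set (Sym2 V))
    (hF : F ⊆ G.edgeSet)
    (c : V → Fin 2) (hc : ∀ u v, (G.deleteEdges F).Adj u v → c u ≠ c v)
    (hmin : ∀ F'' ⊂ F, ¬ (G.deleteEdges F'').Colorable 2)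
    (u v : V) (h : (SimpleGraph.fromEdgeSet F).Reachable u v) : c u = c v :=
  stmt2_general G F c hc hmin u v h
end
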